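/- Let H and K be subgroups of SL_n(ℤ), let α, γ₀ ∈ SL_n(ℤ), and set Γ_σ = (γ₀Hγ₀⁻¹) ∩ Γ₀(N) and C = (α⁻¹Hα) ∩ K. Let O = 𝔟(γ₀)·H ⊆ ℙ^{n-1}(ℤ/Nℤ) and consider the translated set O·α. Then there is a bijection between the set of orbits of Γ_σ acting by left multiplication on the set of left cosets {xK : x ∈ γ₀HαK} and the set of orbits of the right action of C on O·α, under which the Γ_σ-orbit of the coset γ₀hαK (for h ∈ H) corresponds to the C-orbit of 𝔟(γ₀hα). -/

import Mathlib

/-!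
The bottom row map is equivariant, `𝔟(xy) = 𝔟(x)·y`, and `Γ₀(N)` is exactly the set of `g`
with `𝔟(gx) = 𝔟(x)` (for one, equivalently every, `x`). Hence `g ∈ Γ_σ` carries
`γ₀hαK` to `γ₀h'αK` exactly when `c = (γ₀hα)⁻¹ g⁻¹ (γ₀h'α)` lies in `C` and carries
`𝔟(γ₀hα)` to `𝔟(γ₀h'α)`; conversely such a `c` determines `g = (γ₀h'α) c⁻¹ (γ₀hα)⁻¹`.
-/

open Matrix

/-- `SL_n(ℤ)`, the special linear group of `n × n` integer matrices of determinant 1. -/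
abbrev SL (n : ℕ) := Matrix.SpecialLinearGroup (Fin n) ℤ

/-- `Γ₀(N)`: the matrices in `SL_{n+1}(ℤ)` whose bottom row is congruent to
`(0, …, 0, *)` mod `N`, i.e. all bottom-row entries except the last are divisible by `N`. -/
def Gamma0 (N : ℕ) {n : ℕ} (γ : SL (n + 1)) : Prop :=
  ∀ j : Fin (n + 1), j ≠ Fin.last n → (N : ℤ) ∣ γ.1 (Fin.last n) j

/-- A row vector over `ℤ/Nℤ` is primitive if its coordinates generate the unit ideal. -/
def IsPrimitive {m N : ℕ} (v : Fin m → ZMod N) : Prop :=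
  Ideal.span (Set.range v) = ⊤

/-- Primitive row vectors over `ℤ/Nℤ`. -/
def PrimVec (m N : ℕ) := {v : Fin m → ZMod N // IsPrimitive v}

/-- Projective equivalence: two primitive vectors are equivalent iff they differ by
multiplication by a unit of `ℤ/Nℤ`. -/
instance projSetoid (m N : ℕ) : Setoid (PrimVec m N) where
  r v w := ∃ u : (ZMod N)ˣ, w.1 = fun i => (u : ZMod N) * v.1 i
  iseqv := by
    refine ⟨fun v => ⟨1, by funext i; simp⟩, ?_, ?_⟩
    · rintro ⟨v, hv⟩ ⟨w, hw⟩ ⟨u, h⟩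
      replace h : w = fun i => (u : ZMod N) * v i := h
      refine ⟨u⁻¹, ?_⟩
      funext i
      simp [h]
    · rintro ⟨v, hv⟩ ⟨w, hw⟩ ⟨x, hx⟩ ⟨u, h⟩ ⟨u', h'⟩
      replace h : w = fun i => (u : ZMod N) * v i := h
      replace h' : x = fun i => (u' : ZMod N) * w i := h'
      refine ⟨u' * u, ?_⟩
      funext i
      simp [h', h, mul_assoc]

/-- `ℙ^{m-1}(ℤ/Nℤ)`: primitive row vectors modulo multiplication by units of `ℤ/Nℤ`. -/
def Proj (m N : ℕ) := Quotient (projSetoid m N)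

/-- Reduction of an integral matrix mod `N`. -/
def modN {n N : ℕ} (γ : SL n) : Matrix (Fin n) (Fin n) (ZMod N) :=
  γ.1.map (Int.cast : ℤ → ZMod N)

lemma modN_det {n N : ℕ} (γ : SL n) : (modN (N := N) γ).det = 1 := by
  have := (Int.castRingHom (ZMod N)).map_det γ.1
  simpa [modN, γ.2] using this.symm

lemma primitive_vecMul {m N : ℕ} (v : Fin m → ZMod N) (hv : IsPrimitive v) (γ : SL m) :
    IsPrimitive (Matrix.vecMul v (modN γ)) := by
  set A := modN (N := N) γ with hAdef
  have : Invertible A := Matrix.invertibleOfIsUnitDet A (by rw [modN_det]; exact isUnit_one)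
  have hvw : v = Matrix.vecMul (Matrix.vecMul v A) (⅟A) := by
    rw [Matrix.vecMul_vecMul, mul_invOf_self, Matrix.vecMul_one]
  refine eq_top_iff.mpr ?_
  rw [_root_.IsPrimitive] at hv
  rw [← hv]
  refine Ideal.span_le.mpr ?_
  rintro x ⟨j, rfl⟩
  have hj : v j = ∑ i, Matrix.vecMul v A i * (⅟A) i j := congrFun hvw j
  rw [hj]
  exact Ideal.sum_mem _ fun i _ =>
    Ideal.mul_mem_right _ _ (Ideal.subset_span ⟨i, rfl⟩)

lemma vecMul_const_mul {m : ℕ} {R : Type*} [CommRing R] (c : R) (v : Fin m → R)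
    (A : Matrix (Fin m) (Fin m) R) :
    Matrix.vecMul (fun i => c * v i) A = fun j => c * Matrix.vecMul v A j := by
  funext j
  simp [Matrix.vecMul, dotProduct, Finset.mul_sum, mul_assoc]

/-- The map on primitive vectors underlying the right action of `SL_m(ℤ)`. -/
def ractFun {m N : ℕ} (γ : SL m) (v : PrimVec m N) : PrimVec m N :=
  ⟨Matrix.vecMul v.1 (modN γ), primitive_vecMul v.1 v.2 γ⟩

lemma ractFun_compat {m N : ℕ} (γ : SL m) :
    ∀ v w : PrimVec m N, v ≈ w → ractFun γ v ≈ ractFun γ w := by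
  rintro ⟨v, hv⟩ ⟨w, hw⟩ ⟨u, h⟩
  replace h : w = fun i => (u : ZMod N) * v i := h
  refine ⟨u, ?_⟩
  show Matrix.vecMul w (modN γ) = _
  rw [h, vecMul_const_mul]
  rfl

/-- The right action of `SL_m(ℤ)` on `ℙ^{m-1}(ℤ/Nℤ)`: reduce the matrix mod `N` and
multiply the row vector on the right. -/
def ract {m N : ℕ} (x : Proj m N) (γ : SL m) : Proj m N :=
  Quotient.map (ractFun γ) (ractFun_compat γ) x

lemma brow_primitive {n N : ℕ} (γ : SL (n + 1)) :
    IsPrimitive (fun j => ((γ.1 (Fin.last n) j : ℤ) : ZMod N)) := by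
  rw [_root_.IsPrimitive, Ideal.eq_top_iff_one]
  have hdet : γ.1.det = 1 := γ.2
  have hexp := Matrix.det_succ_row γ.1 (Fin.last n)
  have key : ((γ.1.det : ℤ) : ZMod N) ∈
      Ideal.span (Set.range fun j => ((γ.1 (Fin.last n) j : ℤ) : ZMod N)) := by
    rw [hexp]
    push_cast
    refine Ideal.sum_mem _ fun j _ => ?_
    exact Ideal.mul_mem_right _ _ (Ideal.mul_mem_left _ _ (Ideal.subset_span ⟨j, rfl⟩))
  rw [hdet] at key
  simpa using key

/-- The bottom row map `𝔟 : SL_{n+1}(ℤ) → ℙ^n(ℤ/Nℤ)`: the class of the bottom row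
of the matrix, reduced mod `N`. -/
def brow {n : ℕ} (N : ℕ) (γ : SL (n + 1)) : Proj (n + 1) N :=
  ⟦⟨fun j => ((γ.1 (Fin.last n) j : ℤ) : ZMod N), brow_primitive γ⟩⟧

lemma modN_mul {m N : ℕ} (a b : SL m) : modN (N := N) (a * b) = modN a * modN b :=
  Matrix.map_mul (f := Int.castRingHom (ZMod N))

lemma ract_one {m N : ℕ} (x : Proj m N) : ract x 1 = x := by
  induction x using Quotient.inductionOn with
  | h v =>
    show ⟦ractFun 1 v⟧ = ⟦v⟧
    refine congrArg _ (Subtype.ext ?_)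
    simp [ractFun, modN]

lemma ract_ract {m N : ℕ} (x : Proj m N) (a b : SL m) : ract (ract x a) b = ract x (a * b) := by
  induction x using Quotient.inductionOn with
  | h v =>
    show ⟦ractFun b (ractFun a v)⟧ = ⟦ractFun (a * b) v⟧
    exact congrArg _ (Subtype.ext (by simp [ractFun, modN_mul, Matrix.vecMul_vecMul]))

lemma ract_left_injective {m N : ℕ} (a : SL m) : Function.Injective fun x : Proj m N => ract x a :=
  fun x y hxy => by
    simpa [ract_ract, ract_one] using congrArg (fun z => ract z a⁻¹) hxy

lemma brow_mul {n N : ℕ} (x y : SL (n + 1)) : brow N (x * y) = ract (brow N x) y := by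
  refine (congrArg _ (Subtype.ext ?_) : _ = ⟦ractFun y _⟧)
  funext j
  simp [ractFun, modN, Matrix.vecMul, dotProduct, Matrix.mul_apply]

lemma isUnit_of_isPrimitive_of_forall_ne_eq_zero {m N : ℕ} {v : Fin m → ZMod N}
    (hv : IsPrimitive v) (i : Fin m) (hzero : ∀ j ≠ i, v j = 0) : IsUnit (v i) := by
  rw [← Ideal.span_singleton_eq_top, eq_top_iff, ← hv, Ideal.span_le]
  rintro _ ⟨j, rfl⟩
  by_cases hj : j = i
  · exact hj ▸ Ideal.subset_span rfl
  · exact hzero j hj ▸ Ideal.zero_mem _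

lemma gamma0_iff_brow_eq_brow_one {n N : ℕ} (g : SL (n + 1)) :
    Gamma0 N g ↔ brow N g = brow N 1 := by
  set v : Fin (n + 1) → ZMod N := fun j => ((g.1 (Fin.last n) j : ℤ) : ZMod N)
  have hvj : ∀ j, v j = 0 ↔ (N : ℤ) ∣ g.1 (Fin.last n) j := fun j =>
    ZMod.intCast_zmod_eq_zero_iff_dvd _ N
  have hone : ∀ j, j ≠ Fin.last n → (((1 : SL (n + 1)).1 (Fin.last n) j : ℤ) : ZMod N) = 0 :=
    fun j hj => by simp [Matrix.one_apply_ne' hj]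
  refine ⟨fun hg => Quotient.sound ?_, fun hg j hj => ?_⟩
  · have hzero : ∀ j ≠ Fin.last n, v j = 0 := fun j hj => (hvj j).2 (hg j hj)
    obtain ⟨u, hu⟩ := isUnit_of_isPrimitive_of_forall_ne_eq_zero (brow_primitive g) _ hzero
    refine ⟨u⁻¹, funext fun j => ?_⟩
    by_cases hj : j = Fin.last n
    · subst hj
      simp [← hu]
    · exact (hone j hj).trans (mul_eq_zero_of_right _ (hzero j hj)).symm
  · obtain ⟨u, hu⟩ := Quotient.exact hg
    rw [← hvj, ← Units.mul_right_eq_zero u, ← hone j hj]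
    exact (congrFun hu j).symm

lemma brow_mul_eq_brow_iff {n N : ℕ} (g x : SL (n + 1)) :
    brow N (g * x) = brow N x ↔ Gamma0 N g := by
  rw [gamma0_iff_brow_eq_brow_one, brow_mul, ← one_mul x, brow_mul 1, one_mul]
  exact (ract_left_injective x).eq_iff

lemma exists_gamma0_conj_mem_iff_exists_ract_brow {n N : ℕ} {H K : Subgroup (SL (n + 1))}
    (α γ₀ : SL (n + 1)) {h h' : SL (n + 1)} (hh : h ∈ H) (hh' : h' ∈ H) :
    (∃ g : SL (n + 1), ((∃ h'' ∈ H, g = γ₀ * h'' * γ₀⁻¹) ∧ Gamma0 N g) ∧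
        (γ₀ * h' * α)⁻¹ * (g * (γ₀ * h * α)) ∈ K) ↔
      ∃ c : SL (n + 1), ((α * c * α⁻¹ ∈ H) ∧ c ∈ K) ∧
        ract (brow N (γ₀ * h * α)) c = brow N (γ₀ * h' * α) := by
  constructor
  · rintro ⟨g, ⟨⟨h'', hh'', rfl⟩, hg⟩, hk⟩
    set k := (γ₀ * h' * α)⁻¹ * (γ₀ * h'' * γ₀⁻¹ * (γ₀ * h * α)) with hk_def
    refine ⟨k⁻¹, ⟨?_, K.inv_mem hk⟩, ?_⟩
    · have hconj : α * k⁻¹ * α⁻¹ = h⁻¹ * h''⁻¹ * h' := by rw [hk_def]; group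
      rw [hconj]
      exact H.mul_mem (H.mul_mem (H.inv_mem hh) (H.inv_mem hh'')) hh'
    · rw [← brow_mul, ← (brow_mul_eq_brow_iff _ _).2 hg]
      congr 1
      rw [hk_def]
      group
  · rintro ⟨c, ⟨hcH, hcK⟩, hc⟩
    refine ⟨γ₀ * h' * α * c⁻¹ * (γ₀ * h * α)⁻¹, ⟨⟨h' * (α * c * α⁻¹)⁻¹ * h⁻¹,
      H.mul_mem (H.mul_mem hh' (H.inv_mem hcH)) (H.inv_mem hh), by group⟩, ?_⟩, ?_⟩
    · rw [← brow_mul_eq_brow_iff _ (γ₀ * h * α * c), brow_mul (γ₀ * h * α), hc]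
      congr 1
      group
    · convert K.inv_mem hcK using 1
      group

/-- The bijection is encoded by three facts: the orbits of two cosets agree iff the orbits
of the corresponding points agree, every coset of `K` in `γ₀HαK` is of the form `(γ₀hα)K`
with `h ∈ H`, and every point of `O·α` is of the form `𝔟(γ₀hα)` with `h ∈ H`. -/
theorem orbit_bijection_facets_general (n N : ℕ)
    (H K : Subgroup (SL (n + 1))) (α γ₀ : SL (n + 1)) :
    (∀ h ∈ H, ∀ h' ∈ H,
      ((∃ g : SL (n + 1), ((∃ h'' ∈ H, g = γ₀ * h'' * γ₀⁻¹) ∧ Gamma0 N g) ∧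
          (γ₀ * h' * α)⁻¹ * (g * (γ₀ * h * α)) ∈ K) ↔
        (∃ c : SL (n + 1), ((α * c * α⁻¹ ∈ H) ∧ c ∈ K) ∧
          ract (brow N (γ₀ * h * α)) c = brow N (γ₀ * h' * α)))) ∧
    (∀ x : SL (n + 1), (∃ h ∈ H, ∃ k ∈ K, x = γ₀ * h * α * k) →
        ∃ h ∈ H, (γ₀ * h * α)⁻¹ * x ∈ K) ∧
    (∀ y : Proj (n + 1) N,
        (∃ a : Proj (n + 1) N, (∃ h ∈ H, ract (brow N γ₀) h = a) ∧ y = ract a α) →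
          ∃ h ∈ H, y = brow N (γ₀ * h * α)) := by
  refine ⟨fun h hh h' hh' => exists_gamma0_conj_mem_iff_exists_ract_brow α γ₀ hh hh', ?_, ?_⟩
  · rintro x ⟨h, hh, k, hk, rfl⟩
    exact ⟨h, hh, by rwa [inv_mul_cancel_left]⟩
  · rintro y ⟨a, ⟨h, hh, rfl⟩, rfl⟩
    exact ⟨h, hh, by rw [brow_mul, brow_mul]⟩

/-- Let `H, K ≤ SL_{n+1}(ℤ)`, `α, γ₀ ∈ SL_{n+1}(ℤ)`, `Γ_σ = (γ₀Hγ₀⁻¹) ∩ Γ₀(N)`,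
`C = (α⁻¹Hα) ∩ K`, and `O = 𝔟(γ₀)·H ⊆ ℙ^n(ℤ/Nℤ)`.  The assignment sending the
`Γ_σ`-orbit of the left coset `γ₀hαK` to the `C`-orbit of `𝔟(γ₀hα)` is a
(well-defined) bijection between the `Γ_σ`-orbits on the left cosets of `K` contained
in `γ₀HαK` and the `C`-orbits on `O·α`: the orbits of two cosets agree iff the orbits
of the corresponding points agree, every coset of `K` in `γ₀HαK` is of the form
`(γ₀hα)K` with `h ∈ H`, and every point of `O·α` is of the form `𝔟(γ₀hα)` with
`h ∈ H`. -/
theorem orbit_bijection_facets (n N : ℕ) (hn : 1 ≤ n) (hN : 1 ≤ N)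
    (H K : Subgroup (SL (n + 1))) (α γ₀ : SL (n + 1)) :
    (∀ h ∈ H, ∀ h' ∈ H,
      ((∃ g : SL (n + 1), ((∃ h'' ∈ H, g = γ₀ * h'' * γ₀⁻¹) ∧ Gamma0 N g) ∧
          (γ₀ * h' * α)⁻¹ * (g * (γ₀ * h * α)) ∈ K) ↔
        (∃ c : SL (n + 1), ((α * c * α⁻¹ ∈ H) ∧ c ∈ K) ∧
          ract (brow N (γ₀ * h * α)) c = brow N (γ₀ * h' * α)))) ∧
    (∀ x : SL (n + 1), (∃ h ∈ H, ∃ k ∈ K, x = γ₀ * h * α * k) →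
        ∃ h ∈ H, (γ₀ * h * α)⁻¹ * x ∈ K) ∧
    (∀ y : Proj (n + 1) N,
        (∃ a : Proj (n + 1) N, (∃ h ∈ H, ract (brow N γ₀) h = a) ∧ y = ract a α) →
          ∃ h ∈ H, y = brow N (γ₀ * h * α)) :=
  orbit_bijection_facets_general n N H K α γ₀
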